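/- Let f ∈ ℚ[[t]] be the unique formal power series with f(0)=0 satisfying f = t + tf + 2t²f + t²f² + t³f². Then the coefficients of f are nonnegative integers, and the coefficient of tⁿ in f equals the Riordan number R(n+1) for all n ≥ 0. -/

import Mathlib

/-- The Riordan numbers: `R(0)=1`, `R(1)=0`, `(n+2)·R(n+1) = n·(2R(n)+3R(n-1))`. -/
def riordan : ℕ → ℚ
  | 0 => 1
  | 1 => 0
  | (n+2) => ((n : ℚ) + 1) * (2 * riordan (n+1) + 3 * riordan n) / ((n : ℚ) + 3)

open PowerSeries

/-!
Writing the equation as `f = X * G(f)` with `G(f) = 1 + f + 2Xf + Xf² + X²f²`, the coefficient of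
`Xⁿ⁺¹` in `f` is a polynomial with natural coefficients in those of degree `≤ n`, so all
coefficients are natural numbers.

Completing the square, `u = 2(X² + X³)f + 2X² + X - 1` satisfies `u² = (1 + X)(1 - 3X)`. This
makes `u` times `(1 - 2X - 3X²) X f' - (6X² + 2X - 2) f - 3X` a combination of the equation and
its derivative, and `u` is a unit. On coefficients the resulting linear differential equation is
the Riordan recurrence `(n + 4) aₙ₊₂ = (n + 2)(2aₙ₊₁ + 3aₙ)`, and `a₀ = 0 = R(1)`, `a₁ = 1 = R(2)`.
-/

namespace PowerSeries

variable {R : Type*}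

section LowCoeffs

variable [CommSemiring R]

def lowCoeffSubsemiring (S : Subsemiring R) (n : ℕ) : Subsemiring R⟦X⟧ where
  carrier := {g | ∀ i ≤ n, coeff i g ∈ S}
  zero_mem' _ _ := by simp [S.zero_mem]
  one_mem' i _ := by
    rw [coeff_one]
    split_ifs
    exacts [S.one_mem, S.zero_mem]
  add_mem' hg hh i hi := by simpa using S.add_mem (hg i hi) (hh i hi)
  mul_mem' {g h} hg hh i hi := by
    rw [coeff_mul]
    refine S.sum_mem fun p hp => S.mul_mem (hg _ ?_) (hh _ ?_) <;>
      linarith [Finset.HasAntidiagonal.mem_antidiagonal.mp hp]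

variable {S : Subsemiring R}

theorem X_mem_lowCoeffSubsemiring (n : ℕ) : X ∈ lowCoeffSubsemiring S n := fun i _ => by
  rw [coeff_X]
  split_ifs
  exacts [S.one_mem, S.zero_mem]

theorem coeff_mem_of_eq_X_mul {F : R⟦X⟧ → R⟦X⟧}
    (hF : ∀ n g, g ∈ lowCoeffSubsemiring S n → F g ∈ lowCoeffSubsemiring S n)
    {f : R⟦X⟧} (hf : f = X * F f) (n : ℕ) : coeff n f ∈ S := by
  suffices ∀ n, f ∈ lowCoeffSubsemiring S n from this n n le_rfl
  intro n
  induction n with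
  | zero =>
    intro i hi
    rw [Nat.le_zero.mp hi, hf, coeff_zero_X_mul]
    exact S.zero_mem
  | succ n ih =>
    rintro (_ | i) hi
    · rw [hf, coeff_zero_X_mul]
      exact S.zero_mem
    · rw [hf, coeff_succ_X_mul]
      exact hF n f ih i (by omega)

end LowCoeffs

theorem coeff_X_mul_derivative [CommSemiring R] (f : R⟦X⟧) (n : ℕ) :
    coeff n (X * d⁄dX R f) = n * coeff n f := by
  cases n with
  | zero => simp
  | succ n =>
    rw [coeff_succ_X_mul, coeff_derivative, mul_comm]
    push_cast
    ring

end PowerSeries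

theorem riordan_add_two_mul (n : ℕ) :
    ((n : ℚ) + 3) * riordan (n + 2) = (n + 1) * (2 * riordan (n + 1) + 3 * riordan n) := by
  rw [riordan]
  field_simp

section RiordanSeries

variable {R : Type*}

theorem exists_coeff_eq_natCast_of_eq_X_mul [CommSemiring R] {f : R⟦X⟧}
    (hf : f = X * (1 + f + 2 * X * f + X * f ^ 2 + X ^ 2 * f ^ 2)) (n : ℕ) :
    ∃ m : ℕ, coeff n f = m := by
  set S := (Nat.castRingHom R).rangeS
  have hG : ∀ n g, g ∈ lowCoeffSubsemiring S n →
      1 + g + 2 * X * g + X * g ^ 2 + X ^ 2 * g ^ 2 ∈ lowCoeffSubsemiring S n := by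
    intro n g hg
    have hX := X_mem_lowCoeffSubsemiring (S := S) n
    have h2 : (2 : R⟦X⟧) ∈ lowCoeffSubsemiring S n := ofNat_mem _ 2
    refine add_mem (add_mem (add_mem (add_mem (one_mem _) hg) ?_) ?_) ?_ <;>
      apply_rules [pow_mem, mul_mem]
  obtain ⟨m, hm⟩ := RingHom.mem_rangeS.mp (coeff_mem_of_eq_X_mul hG hf n)
  exact ⟨m, hm.symm⟩

theorem derivative_eq_of_eq_X_mul [CommRing R] {f : R⟦X⟧}
    (hf : f = X * (1 + f + 2 * X * f + X * f ^ 2 + X ^ 2 * f ^ 2)) :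
    (1 - 2 * X - 3 * X ^ 2) * (X * d⁄dX R f) = (6 * X ^ 2 + 2 * X - 2) * f + 3 * X := by
  set u : R⟦X⟧ := 2 * (X ^ 2 + X ^ 3) * f + 2 * X ^ 2 + X - 1
  have hu : IsUnit u := by
    rw [isUnit_iff_constantCoeff]
    simp [u]
  have hd := congrArg (d⁄dX R) hf
  have h2 : d⁄dX R 2 = 0 := by simpa using (d⁄dX R).map_natCast 2
  simp only [map_add, Derivation.leibniz, Derivation.leibniz_pow, Derivation.map_one_eq_zero,
    h2, derivative_X, smul_eq_mul, nsmul_eq_mul] at hd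
  have key : u * ((1 - 2 * X - 3 * X ^ 2) * (X * d⁄dX R f) -
      ((6 * X ^ 2 + 2 * X - 2) * f + 3 * X)) = 0 := by
    linear_combination (-X + 2 * X ^ 2 + 3 * X ^ 3) * hd + (X + 3 * X ^ 2 - 2) * hf
  exact sub_eq_zero.mp (hu.mul_right_eq_zero.mp key)

theorem coeff_add_two_of_eq_X_mul [CommRing R] {f : R⟦X⟧}
    (hf : f = X * (1 + f + 2 * X * f + X * f ^ 2 + X ^ 2 * f ^ 2)) (k : ℕ) :
    ((k : R) + 4) * coeff (k + 2) f = (k + 2) * (2 * coeff (k + 1) f + 3 * coeff k f) := by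
  set θf := X * d⁄dX R f
  have hode : θf - C 2 * (X * θf) - C 3 * (X ^ 2 * θf) =
      C 6 * (X ^ 2 * f) + C 2 * (X * f) - C 2 * f + C 3 * X := by
    simp only [map_ofNat]
    linear_combination derivative_eq_of_eq_X_mul hf
  have h := congrArg (coeff (k + 2)) hode
  simp only [map_add, map_sub, coeff_C_mul, coeff_succ_X_mul, coeff_X_pow_mul, coeff_X] at h
  rw [coeff_X_mul_derivative, coeff_X_mul_derivative, coeff_X_mul_derivative,
    if_neg (by omega)] at h
  push_cast at h
  linear_combination h

theorem coeff_eq_riordan_of_eq_X_mul {f : ℚ⟦X⟧}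
    (hf : f = X * (1 + f + 2 * X * f + X * f ^ 2 + X ^ 2 * f ^ 2)) (n : ℕ) :
    coeff n f = riordan (n + 1) := by
  have hf0 : constantCoeff f = 0 := by rw [hf, map_mul, constantCoeff_X, zero_mul]
  induction n using Nat.strong_induction_on with
  | _ n ih =>
    match n with
    | 0 => simpa [riordan] using hf0
    | 1 =>
      rw [hf, coeff_succ_X_mul]
      simp [hf0, riordan]
    | k + 2 =>
      have hk : ((k : ℚ) + 4) ≠ 0 := by positivity
      apply mul_left_cancel₀ hk
      rw [coeff_add_two_of_eq_X_mul hf, ih k (by omega), ih (k + 1) (by omega)]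
      have h := riordan_add_two_mul (k + 1)
      push_cast [add_assoc] at h ⊢
      linear_combination -h

end RiordanSeries

theorem coeff_f_eq_riordan_general (f : PowerSeries ℚ)
    (hf : f = X + X * f + 2 * X^2 * f + X^2 * f^2 + X^3 * f^2) :
    ∀ n : ℕ, (∃ m : ℕ, PowerSeries.coeff n f = m) ∧
      PowerSeries.coeff n f = riordan (n+1) := by
  have hf' : f = X * (1 + f + 2 * X * f + X * f ^ 2 + X ^ 2 * f ^ 2) := by
    linear_combination hf
  exact fun n => ⟨exists_coeff_eq_natCast_of_eq_X_mul hf' n, coeff_eq_riordan_of_eq_X_mul hf' n⟩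

/-- Let `f ∈ ℚ[[t]]` with `f(0)=0` satisfy `f = t + tf + 2t²f + t²f² + t³f²`.
Then the coefficients of `f` are nonnegative integers, and the coefficient of
`tⁿ` in `f` equals the Riordan number `R(n+1)` for all `n ≥ 0`. -/
theorem coeff_f_eq_riordan (f : PowerSeries ℚ)
    (hf0 : constantCoeff f = 0)
    (hf : f = X + X * f + 2 * X^2 * f + X^2 * f^2 + X^3 * f^2) :
    ∀ n : ℕ, (∃ m : ℕ, PowerSeries.coeff n f = m) ∧
      PowerSeries.coeff n f = riordan (n+1) :=
  coeff_f_eq_riordan_general f hf
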